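/- arXiv:2209.10715 — 4 statements merged into one kernel-verified Lean document; each statement's English description precedes it below -/
import Mathlib

section
/- Let X be a set and k : X × X → ℝ a symmetric positive-semidefinite kernel with k(x,x) ≤ 1 for all x ∈ X. Fix N ≥ 1 and set λ = 1 + 2/N. For any points x_1,…,x_N ∈ X, let σ_{i−1}(x) = sqrt( k(x,x) − k_{i−1}(x)ᵀ(K_{i−1} + λI)⁻¹ k_{i−1}(x) ) be the posterior standard deviation from the first i−1 points (σ_0(x) = sqrt(k(x,x))), and let γ_N = (1/2) log det(I_N + λ⁻¹ K_N) with K_N = [k(x_i,x_j)]_{i,j=1}^N. Then Σ_{i=1}^N σ_{i−1}(x_i) ≤ sqrt(4 (N+2) γ_N). -/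
open Matrix

/-- Kernel matrix of the first `t` points `x 1, …, x t`. -/
noncomputable def kerMat {X : Type*} (k : X → X → ℝ) (x : ℕ → X) (t : ℕ) :
    Matrix (Fin t) (Fin t) ℝ :=
  Matrix.of fun i j : Fin t => k (x (i.1 + 1)) (x (j.1 + 1))

/-- Kernel vector `(k(y, x 1), …, k(y, x t))`. -/
noncomputable def kerVec {X : Type*} (k : X → X → ℝ) (x : ℕ → X) (t : ℕ) (y : X) :
    Fin t → ℝ :=
  fun i : Fin t => k y (x (i.1 + 1))

/-- Probabilistic least-squares estimator `π̂_t(y) = k_t(y)ᵀ (K_t + λ I)⁻¹ z_{1:t}`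
(with the convention `π̂_0 ≡ 0`). -/
noncomputable def plsEstimator {X : Type*} (k : X → X → ℝ) (x : ℕ → X) (z : ℕ → ℝ)
    (lam : ℝ) (t : ℕ) (y : X) : ℝ :=
  kerVec k x t y ⬝ᵥ
    ((kerMat k x t + lam • (1 : Matrix (Fin t) (Fin t) ℝ))⁻¹ *ᵥ fun i : Fin t => z (i.1 + 1))

/-- Posterior variance `σ_t²(y) = k(y,y) - k_t(y)ᵀ (K_t + λ I)⁻¹ k_t(y)`
(with the convention `σ_0²(y) = k(y,y)`). -/
noncomputable def postVar {X : Type*} (k : X → X → ℝ) (x : ℕ → X) (lam : ℝ) (t : ℕ)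
    (y : X) : ℝ :=
  k y y - kerVec k x t y ⬝ᵥ
    ((kerMat k x t + lam • (1 : Matrix (Fin t) (Fin t) ℝ))⁻¹ *ᵥ kerVec k x t y)

/-- Posterior standard deviation `σ_t(y)`. -/
noncomputable def postStd {X : Type*} (k : X → X → ℝ) (x : ℕ → X) (lam : ℝ) (t : ℕ)
    (y : X) : ℝ :=
  Real.sqrt (postVar k x lam t y)

/-- A kernel is symmetric positive semidefinite if every finite kernel matrix is
positive semidefinite. -/
def IsPSDKernel {X : Type*} (k : X → X → ℝ) : Prop :=
  ∀ (m : ℕ) (y : Fin m → X), (Matrix.of fun i j : Fin m => k (y i) (y j)).PosSemidef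

/-- Information gain `γ_t = (1/2) log det (I + λ⁻¹ K_t)` of the points `x 1, …, x t`. -/
noncomputable def infoGain {X : Type*} (k : X → X → ℝ) (x : ℕ → X) (lam : ℝ) (t : ℕ) : ℝ :=
  (1 / 2 : ℝ) * Real.log (1 + lam⁻¹ • kerMat k x t).det

/-!
Write `A_t = K_t + λ I`. Bordering `A_t` by the point `x_{t+1}` and taking the Schur complement
gives `det A_{t+1} = det A_t · (λ + σ_t²(x_{t+1}))`, so `det (I + λ⁻¹ K_N) = ∏ (1 + σ_{i-1}²(x_i)/λ)`
and `2 γ_N = ∑ log (1 + σ_{i-1}²(x_i)/λ)`. Since `0 ≤ σ² ≤ 1 ≤ λ`, the elementary bound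
`u ≤ 2 log (1 + u)` on `[0, 1]` yields `∑ σ_{i-1}²(x_i) ≤ 4 λ γ_N`, and Cauchy–Schwarz together
with `N λ = N + 2` finishes the proof.
-/

section SchurComplement

variable {n : Type*} [Fintype n]

lemma replicateRow_mul_mul_replicateCol_apply (v w : n → ℝ) (B : Matrix n n ℝ) (i j : Fin 1) :
    (replicateRow (Fin 1) v * B * replicateCol (Fin 1) w) i j = v ⬝ᵥ B *ᵥ w := by
  rw [Matrix.mul_assoc, ← replicateCol_mulVec, replicateRow_mul_replicateCol_apply]

variable [DecidableEq n]

lemma det_fromBlocks_replicateCol_replicateRow {A : Matrix n n ℝ} (hA : IsUnit A)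
    (v : n → ℝ) (D : Matrix (Fin 1) (Fin 1) ℝ) :
    (fromBlocks A (replicateCol (Fin 1) v) (replicateRow (Fin 1) v) D).det
      = A.det * (D 0 0 - v ⬝ᵥ A⁻¹ *ᵥ v) := by
  have := hA.invertible
  rw [det_fromBlocks₁₁, invOf_eq_nonsing_inv, det_fin_one, Matrix.sub_apply,
    replicateRow_mul_mul_replicateCol_apply]

lemma Matrix.PosDef.sub_dotProduct_inv_mulVec_nonneg {A : Matrix n n ℝ} (hA : A.PosDef) (v : n → ℝ)
    {D : Matrix (Fin 1) (Fin 1) ℝ}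
    (h : (fromBlocks A (replicateCol (Fin 1) v) (replicateRow (Fin 1) v) D).PosSemidef) :
    0 ≤ D 0 0 - v ⬝ᵥ A⁻¹ *ᵥ v := by
  have := hA.isUnit.invertible
  have hrow : replicateRow (Fin 1) v = (replicateCol (Fin 1) v)ᴴ := by
    ext; simp [conjTranspose_apply]
  rw [hrow, hA.fromBlocks₁₁] at h
  simpa [← hrow, replicateRow_mul_mul_replicateCol_apply] using h.diag_nonneg (i := 0)

end SchurComplement

lemma le_two_mul_log_one_add {u : ℝ} (h0 : 0 ≤ u) (h1 : u ≤ 1) : u ≤ 2 * Real.log (1 + u) := by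
  have hlog := Real.one_sub_inv_le_log_of_pos (by linarith : 0 < 1 + u)
  have hinv : 1 - (1 + u)⁻¹ = u / (1 + u) := by field_simp; ring
  rw [hinv, div_le_iff₀' (by linarith)] at hlog
  nlinarith

section Kernel

variable {X : Type*} {k : X → X → ℝ}

lemma IsPSDKernel.symm (hk : IsPSDKernel k) (a b : X) : k a b = k b a := by
  simpa using ((hk 2 ![a, b]).isHermitian.apply 0 1).symm

lemma kerMat_posSemidef (hk : IsPSDKernel k) (x : ℕ → X) (t : ℕ) : (kerMat k x t).PosSemidef :=
  hk t fun i => x (i.1 + 1)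

lemma kerMat_add_smul_one_posDef (hk : IsPSDKernel k) (x : ℕ → X) {lam : ℝ} (hlam : 0 < lam)
    (t : ℕ) : (kerMat k x t + lam • (1 : Matrix (Fin t) (Fin t) ℝ)).PosDef :=
  PosDef.posSemidef_add (kerMat_posSemidef hk x t) (PosDef.one.smul hlam)

lemma kerMat_succ_submatrix (hsymm : ∀ a b : X, k a b = k b a) (x : ℕ → X) (t : ℕ) :
    (kerMat k x (t + 1)).submatrix finSumFinEquiv finSumFinEquiv
      = fromBlocks (kerMat k x t) (replicateCol (Fin 1) (kerVec k x t (x (t + 1))))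
          (replicateRow (Fin 1) (kerVec k x t (x (t + 1))))
          (of fun _ _ => k (x (t + 1)) (x (t + 1))) := by
  ext (i | i) (j | j) <;> simp [kerMat, kerVec, hsymm (x (t + 1)), Fin.val_eq_zero]

lemma kerMat_add_smul_one_succ_submatrix (hsymm : ∀ a b : X, k a b = k b a) (x : ℕ → X)
    (lam : ℝ) (t : ℕ) :
    (kerMat k x (t + 1) + lam • 1).submatrix finSumFinEquiv finSumFinEquiv
      = fromBlocks (kerMat k x t + lam • 1) (replicateCol (Fin 1) (kerVec k x t (x (t + 1))))
          (replicateRow (Fin 1) (kerVec k x t (x (t + 1))))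
          (of (fun _ _ => k (x (t + 1)) (x (t + 1))) + lam • 1) := by
  rw [submatrix_add, Pi.add_apply, Pi.add_apply, kerMat_succ_submatrix hsymm, submatrix_smul,
    Pi.smul_apply, Pi.smul_apply, submatrix_one_equiv,
    ← fromBlocks_one, fromBlocks_smul, fromBlocks_add]
  simp

lemma postVar_nonneg (hk : IsPSDKernel k) (x : ℕ → X) {lam : ℝ} (hlam : 0 < lam) (t : ℕ) :
    0 ≤ postVar k x lam t (x (t + 1)) := by
  -- `σ_t²(x_{t+1})` is the Schur complement of `K_t + λ I` in `K_{t+1} + diag(λ I, 0) ⪰ 0`.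
  have hcorner : (fromBlocks (lam • 1 : Matrix (Fin t) (Fin t) ℝ) 0 0
      (0 : Matrix (Fin 1) (Fin 1) ℝ)).PosSemidef := by
    rw [smul_one_eq_diagonal, ← diagonal_zero, fromBlocks_diagonal]
    exact PosSemidef.diagonal fun i => by cases i <;> simp [hlam.le]
  have hbordered := ((kerMat_posSemidef hk x (t + 1)).submatrix finSumFinEquiv).add hcorner
  rw [kerMat_succ_submatrix hk.symm, fromBlocks_add, add_zero, add_zero, add_zero] at hbordered
  simpa [postVar] using
    (kerMat_add_smul_one_posDef hk x hlam t).sub_dotProduct_inv_mulVec_nonneg _ hbordered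

lemma postVar_le_self (hk : IsPSDKernel k) (x : ℕ → X) {lam : ℝ} (hlam : 0 < lam) (t : ℕ)
    (y : X) : postVar k x lam t y ≤ k y y :=
  sub_le_self _ <| by
    simpa using (kerMat_add_smul_one_posDef hk x hlam t).inv.posSemidef.dotProduct_mulVec_nonneg
      (kerVec k x t y)

lemma det_kerMat_add_smul_one_succ (hk : IsPSDKernel k) (x : ℕ → X) {lam : ℝ} (hlam : 0 < lam)
    (t : ℕ) :
    (kerMat k x (t + 1) + lam • 1).det
      = (kerMat k x t + lam • 1).det * (lam + postVar k x lam t (x (t + 1))) := by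
  rw [← det_submatrix_equiv_self finSumFinEquiv, kerMat_add_smul_one_succ_submatrix hk.symm,
    det_fromBlocks_replicateCol_replicateRow (kerMat_add_smul_one_posDef hk x hlam t).isUnit]
  congr 1
  simp [postVar]
  ring

lemma det_kerMat_add_smul_one_eq_prod (hk : IsPSDKernel k) (x : ℕ → X) {lam : ℝ} (hlam : 0 < lam)
    (N : ℕ) :
    (kerMat k x N + lam • 1).det = ∏ i ∈ Finset.range N, (lam + postVar k x lam i (x (i + 1))) := by
  induction N with
  | zero => simp
  | succ n ih => rw [det_kerMat_add_smul_one_succ hk x hlam, ih, Finset.prod_range_succ]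

lemma two_mul_infoGain_eq_sum_log (hk : IsPSDKernel k) (x : ℕ → X) {lam : ℝ} (hlam : 0 < lam) (N : ℕ) :
    2 * infoGain k x lam N
      = ∑ i ∈ Finset.range N, Real.log (1 + postVar k x lam i (x (i + 1)) / lam) := by
  have hscale : 1 + lam⁻¹ • kerMat k x N = lam⁻¹ • (kerMat k x N + lam • 1) := by
    rw [smul_add, smul_smul, inv_mul_cancel₀ hlam.ne', one_smul, add_comm]
  have hfactor (i : ℕ) :
      lam⁻¹ * (lam + postVar k x lam i (x (i + 1))) = 1 + postVar k x lam i (x (i + 1)) / lam := by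
    field_simp
  rw [infoGain, hscale, det_smul, det_kerMat_add_smul_one_eq_prod hk x hlam, Fintype.card_fin,
    show lam⁻¹ ^ N = ∏ _i ∈ Finset.range N, lam⁻¹ by simp, ← Finset.prod_mul_distrib,
    Finset.prod_congr rfl fun i _ => hfactor i,
    Real.log_prod fun i _ => by have := postVar_nonneg hk x hlam i; positivity]
  ring

lemma sum_postVar_le (hk : IsPSDKernel k) (hbdd : ∀ y : X, k y y ≤ 1) (x : ℕ → X) {lam : ℝ}
    (hlam : 1 ≤ lam) (N : ℕ) :
    ∑ i ∈ Finset.range N, postVar k x lam i (x (i + 1)) ≤ 4 * lam * infoGain k x lam N := by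
  have hlam0 : 0 < lam := one_pos.trans_le hlam
  have hterm (i : ℕ) : postVar k x lam i (x (i + 1))
      ≤ 2 * lam * Real.log (1 + postVar k x lam i (x (i + 1)) / lam) := by
    have hle := (postVar_le_self hk x hlam0 i (x (i + 1))).trans (hbdd _)
    have key := le_two_mul_log_one_add (div_nonneg (postVar_nonneg hk x hlam0 i) hlam0.le)
      ((div_le_one hlam0).2 (hle.trans hlam))
    rw [div_le_iff₀' hlam0] at key
    linarith
  calc ∑ i ∈ Finset.range N, postVar k x lam i (x (i + 1))
      ≤ ∑ i ∈ Finset.range N, 2 * lam * Real.log (1 + postVar k x lam i (x (i + 1)) / lam) :=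
        Finset.sum_le_sum fun i _ => hterm i
    _ = 4 * lam * infoGain k x lam N := by
        rw [← Finset.mul_sum, ← two_mul_infoGain_eq_sum_log hk x hlam0]; ring

end Kernel

theorem sum_posterior_std_le_general {X : Type*} (k : X → X → ℝ)
    (hpsd : IsPSDKernel k)
    (hbdd : ∀ y : X, k y y ≤ 1)
    (N : ℕ) (lam : ℝ) (hlam : lam = 1 + 2 / (N : ℝ)) (x : ℕ → X) :
    ∑ i ∈ Finset.range N, postStd k x lam i (x (i + 1)) ≤
      Real.sqrt (4 * ((N : ℝ) + 2) * infoGain k x lam N) := by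
  rcases N.eq_zero_or_pos with rfl | hN
  · simp
  have hNlam : (N : ℝ) * lam = N + 2 := by
    rw [hlam]; field_simp [(Nat.cast_pos.2 hN).ne']
  have hlam1 : 1 ≤ lam := by rw [hlam]; linarith [show (0 : ℝ) ≤ 2 / N by positivity]
  have hcs := sq_sum_le_card_mul_sum_sq (s := Finset.range N)
    (f := fun i => postStd k x lam i (x (i + 1)))
  simp only [postStd, Finset.card_range,
    Real.sq_sqrt (postVar_nonneg hpsd x (one_pos.trans_le hlam1) _)] at hcs
  refine (le_abs_self _).trans (Real.abs_le_sqrt ?_)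
  calc _ ≤ (N : ℝ) * ∑ i ∈ Finset.range N, postVar k x lam i (x (i + 1)) := hcs
    _ ≤ N * (4 * lam * infoGain k x lam N) := by
        gcongr; exact sum_postVar_le hpsd hbdd x hlam1 N
    _ = 4 * ((N : ℝ) + 2) * infoGain k x lam N := by rw [← hNlam]; ring

/-- **Lemma A.2 (Chowdhury & Gopalan, Lemma 4).** For a symmetric PSD kernel with
`k(y,y) ≤ 1` and `λ = 1 + 2/N`, the sum of sequential posterior standard
deviations along the queried points is bounded by the information gain:
`Σ_{i=1}^N σ_{i-1}(x_i) ≤ √(4 (N+2) γ_N)`. -/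
theorem sum_posterior_std_le {X : Type*} (k : X → X → ℝ)
    (hsymm : ∀ a b : X, k a b = k b a) (hpsd : IsPSDKernel k)
    (hbdd : ∀ y : X, k y y ≤ 1)
    (N : ℕ) (hN : 1 ≤ N) (lam : ℝ) (hlam : lam = 1 + 2 / (N : ℝ)) (x : ℕ → X) :
    ∑ i ∈ Finset.range N, postStd k x lam i (x (i + 1)) ≤
      Real.sqrt (4 * ((N : ℝ) + 2) * infoGain k x lam N) :=
  sum_posterior_std_le_general k hpsd hbdd N lam hlam x
end

section
/- Let X be a set, k : X × X → ℝ a symmetric positive-semidefinite kernel, and η > 0. For a finite tuple A = (a_1,…,a_m) of points of X define k(x, A) = (k(x,a_1),…,k(x,a_m)), K(A) = [k(a_i,a_j)]_{i,j=1}^m, and σ_A²(x) = k(x,x) − k(x,A)ᵀ(K(A) + ηI)⁻¹ k(x,A). If B is a finite tuple of points of X obtained from A by appending additional points (so A is an initial sub-tuple of B), then σ_B²(x) ≤ σ_A²(x) for all x ∈ X. -/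
/-!
For a positive definite `M`, the quadratic form of `M⁻¹` has the variational description
`v ⬝ᵥ M⁻¹ v = max_z (2 z ⬝ᵥ v - z ⬝ᵥ M z)`. The regularized kernel matrix of `A` is a principal
submatrix of that of `B`, and extending a vector by zero turns a candidate `z` for `A` into a
candidate for `B` with the same value. Hence the subtracted term `k(y,A)ᵀ (K(A) + η I)⁻¹ k(y,A)`
can only grow when points are added.
-/

open Matrix

/-- Posterior variance `σ_A²(y) = k(y,y) - k(y,A)ᵀ (K(A) + η I)⁻¹ k(y,A)` given a
finite tuple `A` of observation locations. -/
noncomputable def postVarTuple {X : Type*} (k : X → X → ℝ) (η : ℝ) {m : ℕ}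
    (A : Fin m → X) (y : X) : ℝ :=
  k y y - (fun i : Fin m => k y (A i)) ⬝ᵥ
    (((Matrix.of fun i j : Fin m => k (A i) (A j)) + η • (1 : Matrix (Fin m) (Fin m) ℝ))⁻¹
      *ᵥ fun i : Fin m => k y (A i))

namespace Matrix

section ExtendByZero

variable {α l m n : Type*} [Fintype m] [Fintype n] {e : m → n}

theorem extend_zero_dotProduct [NonUnitalNonAssocSemiring α] (he : Function.Injective e)
    (z : m → α) (v : n → α) :
    Function.extend e z 0 ⬝ᵥ v = z ⬝ᵥ (v ∘ e) := by
  refine (Fintype.sum_of_injective e he _ _ (fun i hi => ?_) (fun j => ?_)).symm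
  · simp [Function.extend_apply' _ _ _ fun ⟨j, hj⟩ => hi ⟨j, hj⟩]
  · simp [he.extend_apply]

theorem mulVec_extend_zero [NonUnitalCommSemiring α] (he : Function.Injective e)
    (M : Matrix l n α) (z : m → α) :
    M *ᵥ Function.extend e z 0 = M.submatrix id e *ᵥ z := by
  ext i
  rw [mulVec, dotProduct_comm, extend_zero_dotProduct he, dotProduct_comm]
  rfl

end ExtendByZero

variable {m n : Type*} [Fintype m] [Fintype n] [DecidableEq m] [DecidableEq n]

theorem PosDef.mulVec_inv_mulVec {M : Matrix n n ℝ} (hM : M.PosDef) (v : n → ℝ) :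
    M *ᵥ (M⁻¹ *ᵥ v) = v := by
  rw [mulVec_mulVec, mul_nonsing_inv M ((isUnit_iff_isUnit_det M).1 hM.isUnit), one_mulVec]

/-- `v ⬝ᵥ M⁻¹ v - (2 z ⬝ᵥ v - z ⬝ᵥ M z) = (z - M⁻¹ v) ⬝ᵥ M (z - M⁻¹ v) ≥ 0`. -/
theorem PosDef.two_mul_dotProduct_sub_le {M : Matrix n n ℝ} (hM : M.PosDef) (v z : n → ℝ) :
    2 * (z ⬝ᵥ v) - z ⬝ᵥ (M *ᵥ z) ≤ v ⬝ᵥ (M⁻¹ *ᵥ v) := by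
  set w := M⁻¹ *ᵥ v
  have hMw : M *ᵥ w = v := hM.mulVec_inv_mulVec v
  have hwMz : w ⬝ᵥ (M *ᵥ z) = z ⬝ᵥ v := by
    rw [dotProduct_mulVec, ← mulVec_transpose, (isHermitian_iff_isSymm.1 hM.isHermitian).eq, hMw,
      dotProduct_comm]
  have hnonneg : 0 ≤ (z - w) ⬝ᵥ (M *ᵥ (z - w)) := by
    simpa only [star_trivial] using hM.posSemidef.dotProduct_mulVec_nonneg (z - w)
  rw [mulVec_sub, sub_dotProduct, dotProduct_sub, dotProduct_sub, hwMz, hMw] at hnonneg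
  rw [dotProduct_comm v w]
  linarith

theorem PosDef.dotProduct_inv_mulVec_submatrix_le {M : Matrix n n ℝ} (hM : M.PosDef)
    {e : m → n} (he : Function.Injective e) (v : n → ℝ) :
    (v ∘ e) ⬝ᵥ ((M.submatrix e e)⁻¹ *ᵥ (v ∘ e)) ≤ v ⬝ᵥ (M⁻¹ *ᵥ v) := by
  set N := M.submatrix e e
  set z := N⁻¹ *ᵥ (v ∘ e)
  have hNz : N *ᵥ z = v ∘ e := (hM.submatrix he).mulVec_inv_mulVec _
  set z' := Function.extend e z 0
  have hz'v : z' ⬝ᵥ v = z ⬝ᵥ (v ∘ e) := extend_zero_dotProduct he z v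
  have hz'Mz' : z' ⬝ᵥ (M *ᵥ z') = z ⬝ᵥ (N *ᵥ z) := by
    rw [mulVec_extend_zero he, extend_zero_dotProduct he]
    rfl
  calc (v ∘ e) ⬝ᵥ z = 2 * (z ⬝ᵥ (v ∘ e)) - z ⬝ᵥ (N *ᵥ z) := by
        rw [hNz, dotProduct_comm]; ring
    _ = 2 * (z' ⬝ᵥ v) - z' ⬝ᵥ (M *ᵥ z') := by rw [hz'v, hz'Mz']
    _ ≤ v ⬝ᵥ (M⁻¹ *ᵥ v) := hM.two_mul_dotProduct_sub_le v z'

end Matrix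

theorem IsPSDKernel.posDef_add_smul_one {X : Type*} {k : X → X → ℝ} (hk : IsPSDKernel k)
    {η : ℝ} (hη : 0 < η) {m : ℕ} (A : Fin m → X) :
    ((Matrix.of fun i j : Fin m => k (A i) (A j)) + η • (1 : Matrix (Fin m) (Fin m) ℝ)).PosDef :=
  PosDef.posSemidef_add (hk m A) (PosDef.one.smul hη)

theorem postVar_mono_general {X : Type*} (k : X → X → ℝ)
    (hpsd : IsPSDKernel k)
    (η : ℝ) (hη : 0 < η) {m n : ℕ} (hmn : m ≤ n) (B : Fin n → X) (y : X) :
    postVarTuple k η B y ≤ postVarTuple k η (B ∘ Fin.castLE hmn) y := by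
  have hsub : (Matrix.of fun i j : Fin m => k ((B ∘ Fin.castLE hmn) i) ((B ∘ Fin.castLE hmn) j)) +
      η • (1 : Matrix (Fin m) (Fin m) ℝ) =
      ((Matrix.of fun i j : Fin n => k (B i) (B j)) + η • (1 : Matrix (Fin n) (Fin n) ℝ)).submatrix
        (Fin.castLE hmn) (Fin.castLE hmn) := by
    ext i j
    simp [one_apply, Fin.castLE_inj]
  unfold postVarTuple
  rw [hsub]
  exact sub_le_sub_left ((hpsd.posDef_add_smul_one hη B).dotProduct_inv_mulVec_submatrix_le
    (Fin.castLE_injective hmn) (fun i => k y (B i))) _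

/-- **Lemma A.3 (BORE paper).** For a symmetric positive-semidefinite kernel and
`η > 0`, the posterior variance is monotonically non-increasing under the addition
of observation locations: if `B` extends the tuple `A` (i.e. `A` is an initial
sub-tuple of `B`), then `σ_B²(y) ≤ σ_A²(y)` for every `y`. -/
theorem postVar_mono {X : Type*} (k : X → X → ℝ)
    (hsymm : ∀ a b : X, k a b = k b a) (hpsd : IsPSDKernel k)
    (η : ℝ) (hη : 0 < η) {m n : ℕ} (hmn : m ≤ n) (B : Fin n → X) (y : X) :
    postVarTuple k η B y ≤ postVarTuple k η (B ∘ Fin.castLE hmn) y :=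
  postVar_mono_general k hpsd η hη hmn B y
end

section
/- Let (X, Σ, μ) be a probability space and let π, u : X → ℝ be measurable functions with 0 < m ≤ π(x) ≤ u(x) for all x ∈ X and with η := ∫ u dμ < ∞. Set γ := ∫ π dμ (so 0 < γ ≤ η), and define the probability measures ℓ = (π/γ)·μ and q = (u/η)·μ. Then the Kullback–Leibler divergence satisfies KL(q ‖ ℓ) ≤ ∫ (log u(x) − log π(x)) dq(x) ≤ (1/m) ∫ (u(x) − π(x)) dq(x). -/
/-!
Since `γ ≤ η`, the normalized ratio `(u/η)/(π/γ) = (u/π)(γ/η)` is at most `u/π`, which gives the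
first inequality pointwise. The second is `log u - log π = log (u/π) ≤ u/π - 1 = (u - π)/π`
together with `π ≥ m`.
-/

open MeasureTheory

namespace Real

theorem log_div_div_le_log_sub_log {a b γ η : ℝ} (ha : 0 < a) (hb : 0 < b) (hγ : 0 < γ)
    (hγη : γ ≤ η) : log ((b / η) / (a / γ)) ≤ log b - log a := by
  have hη : 0 < η := hγ.trans_le hγη
  rw [← log_div hb.ne' ha.ne']
  refine log_le_log (by positivity) ?_
  calc b / η / (a / γ) = b / a * (γ / η) := by field_simp
    _ ≤ b / a * 1 := by gcongr; exact (div_le_one hη).2 hγη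
    _ = b / a := mul_one _

theorem log_sub_log_le_div_of_le {a b m : ℝ} (hm : 0 < m) (hma : m ≤ a) (hab : a ≤ b) :
    log b - log a ≤ 1 / m * (b - a) := by
  have ha : 0 < a := hm.trans_le hma
  have hb : 0 < b := ha.trans_le hab
  calc log b - log a = log (b / a) := (log_div hb.ne' ha.ne').symm
    _ ≤ b / a - 1 := log_le_sub_one_of_pos (by positivity)
    _ = (b - a) / a := by field_simp
    _ ≤ (b - a) / m := div_le_div_of_nonneg_left (sub_nonneg.2 hab) hm hma
    _ = 1 / m * (b - a) := by ring

end Real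

namespace MeasureTheory

variable {α : Type*} [MeasurableSpace α] {μ : Measure α}

/-- A non-integrable `f` has junk integral `0`, which the hypothesis `0 ≤ ∫ g` still bounds. -/
theorem integral_le_integral_of_le_of_integral_nonneg {f g : α → ℝ} (hg : Integrable g μ)
    (hfg : ∀ᵐ x ∂μ, f x ≤ g x) (hg_nonneg : 0 ≤ ∫ x, g x ∂μ) :
    ∫ x, f x ∂μ ≤ ∫ x, g x ∂μ := by
  by_cases hf : Integrable f μ
  · exact integral_mono_ae hf hg hfg
  · rwa [integral_undef hf]

end MeasureTheory

theorem kl_bound_dominating_density_general {X : Type*} [MeasurableSpace X]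
    (μ : Measure X) [IsProbabilityMeasure μ]
    (π u : X → ℝ) (hπmeas : Measurable π)
    (m : ℝ) (hm : 0 < m) (hmπ : ∀ x, m ≤ π x) (hπu : ∀ x, π x ≤ u x)
    (hu_int : Integrable u μ)
    (γ η : ℝ) (hγ : γ = ∫ x, π x ∂μ) (hη : η = ∫ x, u x ∂μ)
    (q : Measure X)
    (hint_log : Integrable (fun x => Real.log (u x) - Real.log (π x)) q)
    (hint_gap : Integrable (fun x => u x - π x) q) :
    (∫ x, Real.log ((u x / η) / (π x / γ)) ∂q) ≤
        (∫ x, (Real.log (u x) - Real.log (π x)) ∂q) ∧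
      (∫ x, (Real.log (u x) - Real.log (π x)) ∂q) ≤
        (1 / m) * ∫ x, (u x - π x) ∂q := by
  have hπpos : ∀ x, 0 < π x := fun x => hm.trans_le (hmπ x)
  have hπ_int : Integrable π μ := hu_int.mono' hπmeas.aestronglyMeasurable
    (ae_of_all _ fun x => by rw [Real.norm_of_nonneg (hπpos x).le]; exact hπu x)
  have hγpos : 0 < γ := by
    refine hγ ▸ hm.trans_le ?_
    simpa using integral_mono (integrable_const m) hπ_int hmπ
  have hγη : γ ≤ η := hγ ▸ hη ▸ integral_mono hπ_int hu_int hπu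
  have hlog_nonneg : 0 ≤ ∫ x, (Real.log (u x) - Real.log (π x)) ∂q :=
    integral_nonneg fun x => sub_nonneg.2 (Real.log_le_log (hπpos x) (hπu x))
  refine ⟨integral_le_integral_of_le_of_integral_nonneg hint_log (ae_of_all _ fun x =>
    Real.log_div_div_le_log_sub_log (hπpos x) ((hπpos x).trans_le (hπu x)) hγpos hγη)
    hlog_nonneg, ?_⟩
  calc ∫ x, (Real.log (u x) - Real.log (π x)) ∂q ≤ ∫ x, 1 / m * (u x - π x) ∂q :=
        integral_mono hint_log (hint_gap.const_mul _) fun x =>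
          Real.log_sub_log_le_div_of_le hm (hmπ x) (hπu x)
    _ = 1 / m * ∫ x, (u x - π x) ∂q := integral_const_mul _ _

/-- **Core KL bound in the proof of Theorem 4 (BORE paper).** On a probability
space `(X, Σ, μ)`, let `π, u` be measurable with `0 < m ≤ π ≤ u` and
`η = ∫ u dμ < ∞` (i.e. `u` integrable); set `γ = ∫ π dμ` and consider the
probability measures `ℓ = (π/γ)·μ` and `q = (u/η)·μ`. Then
`KL(q ‖ ℓ) = ∫ log((u/η)/(π/γ)) dq ≤ ∫ (log u - log π) dq ≤ (1/m) ∫ (u - π) dq`. -/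
theorem kl_bound_dominating_density {X : Type*} [MeasurableSpace X]
    (μ : Measure X) [IsProbabilityMeasure μ]
    (π u : X → ℝ) (hπmeas : Measurable π) (humeas : Measurable u)
    (m : ℝ) (hm : 0 < m) (hmπ : ∀ x, m ≤ π x) (hπu : ∀ x, π x ≤ u x)
    (hu_int : Integrable u μ)
    (γ η : ℝ) (hγ : γ = ∫ x, π x ∂μ) (hη : η = ∫ x, u x ∂μ)
    (ℓ q : Measure X)
    (hℓ : ℓ = μ.withDensity fun x => ENNReal.ofReal (π x / γ))
    (hq : q = μ.withDensity fun x => ENNReal.ofReal (u x / η))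
    (hint_log : Integrable (fun x => Real.log (u x) - Real.log (π x)) q)
    (hint_gap : Integrable (fun x => u x - π x) q) :
    (∫ x, Real.log ((u x / η) / (π x / γ)) ∂q) ≤
        (∫ x, (Real.log (u x) - Real.log (π x)) ∂q) ∧
      (∫ x, (Real.log (u x) - Real.log (π x)) ∂q) ≤
        (1 / m) * ∫ x, (u x - π x) ∂q :=
  kl_bound_dominating_density_general μ π u hπmeas m hm hmπ hπu hu_int γ η hγ hη q hint_log hint_gap
end

section
/- Let (X, Σ, μ) be a probability space, k : X × X → ℝ a symmetric positive-semidefinite kernel, λ > 0, and let points x_1,…,x_t ∈ X and labels z_1,…,z_t ∈ ℝ determine the PLS estimator π̂_t and posterior standard deviation σ_t as defined below, assumed measurable in x. Let π : X → ℝ be measurable with 0 < m ≤ π(x) ≤ 1 for all x, and let β_t ≥ 0 satisfy the pointwise confidence bound |π(x) − π̂_t(x)| ≤ β_t σ_t(x) for all x ∈ X. Define the clipped UCB classifier u_t(x) = min(1, max(0, π̂_t(x) + β_t σ_t(x))), the target distribution ℓ = (π/γ)·μ with γ = ∫ π dμ, and the surrogate sampling distribution q_t = (u_t/η_t)·μ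 with η_t = ∫ u_t dμ. Then KL(q_t ‖ ℓ) ≤ (2 β_t / m) ∫ σ_t(x) dq_t(x). -/
open Matrix MeasureTheory

/-- The clipped upper-confidence-bound classifier
`π_t^{UCB}(y) = min(1, max(0, π̂_t(y) + β_t σ_t(y)))` used by BORE++. -/
noncomputable def ucbClassifier {X : Type*} (k : X → X → ℝ) (x : ℕ → X) (z : ℕ → ℝ)
    (lam : ℝ) (β : ℕ → ℝ) (t : ℕ) (y : X) : ℝ :=
  min 1 (max 0 (plsEstimator k x z lam t y + β t * postStd k x lam t y))

/-- **Per-iteration KL bound in the proof of Theorem 4 (batch BORE++).** On a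
probability space `(X, Σ, μ)`, with the PLS estimator `π̂_t` and posterior standard
deviation `σ_t` measurable in `x`, a measurable classifier `π` with
`0 < m ≤ π ≤ 1`, and a confidence bound `|π y - π̂_t y| ≤ β_t σ_t y`, define the
clipped UCB classifier `u_t`, the target `ℓ = (π/γ)·μ` with `γ = ∫ π dμ`, and the
surrogate `q_t = (u_t/η_t)·μ` with `η_t = ∫ u_t dμ`. Then
`KL(q_t ‖ ℓ) ≤ (2 β_t / m) ∫ σ_t dq_t`. -/
theorem batch_bore_plus_plus_kl_bound {X : Type*} [MeasurableSpace X]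
    (μ : Measure X) [IsProbabilityMeasure μ]
    (k : X → X → ℝ) (hsymm : ∀ a b : X, k a b = k b a) (hpsd : IsPSDKernel k)
    (lam : ℝ) (hlam : 0 < lam) (x : ℕ → X) (z : ℕ → ℝ) (t : ℕ)
    (hmeas_pihat : Measurable fun y : X => plsEstimator k x z lam t y)
    (hmeas_std : Measurable fun y : X => postStd k x lam t y)
    (π : X → ℝ) (hπmeas : Measurable π)
    (m : ℝ) (hm : 0 < m) (hmπ : ∀ y : X, m ≤ π y) (hπ1 : ∀ y : X, π y ≤ 1)
    (β : ℕ → ℝ) (hβ : 0 ≤ β t)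
    (hconf : ∀ y : X, |π y - plsEstimator k x z lam t y| ≤ β t * postStd k x lam t y)
    (γ η : ℝ) (hγ : γ = ∫ y, π y ∂μ)
    (hη : η = ∫ y, ucbClassifier k x z lam β t y ∂μ)
    (ℓ q : Measure X)
    (hℓ : ℓ = μ.withDensity fun y => ENNReal.ofReal (π y / γ))
    (hq : q = μ.withDensity fun y => ENNReal.ofReal (ucbClassifier k x z lam β t y / η))
    (hint_std : Integrable (fun y : X => postStd k x lam t y) q) :
    (∫ y, Real.log ((ucbClassifier k x z lam β t y / η) / (π y / γ)) ∂q) ≤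
      (2 * β t / m) * ∫ y, postStd k x lam t y ∂q := by
  have hσ0 : ∀ y, 0 ≤ postStd k x lam t y := fun y => Real.sqrt_nonneg _
  have hπpos : ∀ y, 0 < π y := fun y => lt_of_lt_of_le hm (hmπ y)
  have hu_lb : ∀ y, π y ≤ ucbClassifier k x z lam β t y := by
    intro y
    have h := (abs_le.mp (hconf y)).2
    exact le_min (hπ1 y) (le_trans (by linarith) (le_max_right 0 _))
  have hu_ub : ∀ y, ucbClassifier k x z lam β t y
      ≤ π y + 2 * β t * postStd k x lam t y := by
    intro y
    have h := (abs_le.mp (hconf y)).1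
    exact le_trans (min_le_right _ _)
      (max_le (by nlinarith [hσ0 y, hπpos y, mul_nonneg hβ (hσ0 y)]) (by linarith))
  have hu1 : ∀ y, ucbClassifier k x z lam β t y ≤ 1 := fun y => min_le_left _ _
  have hum : ∀ y, m ≤ ucbClassifier k x z lam β t y := fun y => (hmπ y).trans (hu_lb y)
  have humeas : Measurable fun y => ucbClassifier k x z lam β t y := by
    unfold ucbClassifier
    exact measurable_const.min
      (measurable_const.max (hmeas_pihat.add (measurable_const.mul hmeas_std)))
  have hπint : Integrable π μ := by
    refine (integrable_const (1:ℝ)).mono' hπmeas.aestronglyMeasurable ?_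
    filter_upwards with y
    rw [Real.norm_eq_abs, abs_le]
    exact ⟨by linarith [hmπ y], hπ1 y⟩
  have huint : Integrable (fun y => ucbClassifier k x z lam β t y) μ := by
    refine (integrable_const (1:ℝ)).mono' humeas.aestronglyMeasurable ?_
    filter_upwards with y
    rw [Real.norm_eq_abs, abs_le]
    exact ⟨by linarith [hum y], hu1 y⟩
  have hγm : m ≤ γ := by
    rw [hγ]
    calc m = ∫ _, m ∂μ := by simp
      _ ≤ ∫ y, π y ∂μ := integral_mono (integrable_const m) hπint hmπ
  have hγη : γ ≤ η := by
    rw [hγ, hη]; exact integral_mono hπint huint hu_lb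
  have hη1 : η ≤ 1 := by
    rw [hη]
    calc ∫ y, ucbClassifier k x z lam β t y ∂μ ≤ ∫ _, (1:ℝ) ∂μ :=
        integral_mono huint (integrable_const 1) hu1
      _ = 1 := by simp
  have hγ0 : 0 < γ := hm.trans_le hγm
  have hη0 : 0 < η := hγ0.trans_le hγη
  have e : ∀ y, (ucbClassifier k x z lam β t y / η) / (π y / γ)
      = (γ / η) * (ucbClassifier k x z lam β t y / π y) := by
    intro y
    field_simp
  have hpt : ∀ y, Real.log ((ucbClassifier k x z lam β t y / η) / (π y / γ))
      ≤ 2 * β t / m * postStd k x lam t y := by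
    intro y
    have hupos : 0 < ucbClassifier k x z lam β t y := hm.trans_le (hum y)
    have hargpos : 0 < (ucbClassifier k x z lam β t y / η) / (π y / γ) :=
      div_pos (div_pos hupos hη0) (div_pos (hπpos y) hγ0)
    have h1 : γ / η ≤ 1 := (div_le_one hη0).mpr hγη
    have h2 : ucbClassifier k x z lam β t y / π y
        ≤ 1 + 2 * β t / m * postStd k x lam t y := by
      rw [div_le_iff₀ (hπpos y)]
      have hc : (0:ℝ) ≤ 2 * β t / m := by positivity
      have h4 : 2 * β t / m * postStd k x lam t y * m
          = 2 * β t * postStd k x lam t y := by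
        field_simp
      nlinarith [hu_ub y, mul_nonneg (mul_nonneg hc (hσ0 y)) (sub_nonneg.mpr (hmπ y)), h4]
    have harg : (ucbClassifier k x z lam β t y / η) / (π y / γ)
        ≤ 1 + 2 * β t / m * postStd k x lam t y := by
      rw [e y]
      calc γ / η * (ucbClassifier k x z lam β t y / π y)
          ≤ 1 * (1 + 2 * β t / m * postStd k x lam t y) :=
            mul_le_mul h1 h2 (div_pos hupos (hπpos y)).le zero_le_one
        _ = _ := one_mul _
    have := Real.log_le_sub_one_of_pos hargpos
    linarith
  have hlb : ∀ y, Real.log (m * m)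
      ≤ Real.log ((ucbClassifier k x z lam β t y / η) / (π y / γ)) := by
    intro y
    have hupos : 0 < ucbClassifier k x z lam β t y := hm.trans_le (hum y)
    have h1 : m ≤ γ / η := by
      rw [le_div_iff₀ hη0]; nlinarith [hη1, hγm]
    have h2 : m ≤ ucbClassifier k x z lam β t y / π y := by
      rw [le_div_iff₀ (hπpos y)]; nlinarith [hπ1 y, hum y]
    have hmm : m * m ≤ (ucbClassifier k x z lam β t y / η) / (π y / γ) := by
      rw [e y]
      exact mul_le_mul h1 h2 hm.le (div_pos hγ0 hη0).le
    have hpos : (0:ℝ) < m * m := by positivity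
    exact Real.log_le_log hpos hmm
  have hfmeas : Measurable fun y =>
      Real.log ((ucbClassifier k x z lam β t y / η) / (π y / γ)) :=
    Real.measurable_log.comp ((humeas.div_const η).div (hπmeas.div_const γ))
  haveI hqfin : IsFiniteMeasure q := by
    rw [hq]
    refine ⟨?_⟩
    rw [withDensity_apply _ MeasurableSet.univ, setLIntegral_univ]
    calc ∫⁻ y, ENNReal.ofReal (ucbClassifier k x z lam β t y / η) ∂μ
        ≤ ∫⁻ _, ENNReal.ofReal (1 / η) ∂μ := by
          refine lintegral_mono fun y => ENNReal.ofReal_le_ofReal ?_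
          gcongr
          exact hu1 y
      _ = ENNReal.ofReal (1 / η) := by simp
      _ < ⊤ := ENNReal.ofReal_lt_top
  have hgint : Integrable (fun y => 2 * β t / m * postStd k x lam t y) q :=
    hint_std.const_mul _
  have hfint : Integrable (fun y =>
      Real.log ((ucbClassifier k x z lam β t y / η) / (π y / γ))) q := by
    refine ((hgint.add (integrable_const |Real.log (m * m)|)).mono'
      hfmeas.aestronglyMeasurable ?_)
    filter_upwards with y
    rw [Real.norm_eq_abs, abs_le]
    have hσ := mul_nonneg (by positivity : (0:ℝ) ≤ 2 * β t / m) (hσ0 y)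
    constructor
    · have := hlb y
      have habs : -|Real.log (m * m)| ≤ Real.log (m * m) := neg_abs_le _
      simp only [Pi.add_apply]
      linarith
    · have := hpt y
      simp only [Pi.add_apply]
      linarith [abs_nonneg (Real.log (m * m))]
  calc (∫ y, Real.log ((ucbClassifier k x z lam β t y / η) / (π y / γ)) ∂q)
      ≤ ∫ y, 2 * β t / m * postStd k x lam t y ∂q := integral_mono hfint hgint hpt
    _ = (2 * β t / m) * ∫ y, postStd k x lam t y ∂q := integral_const_mul _ _
end
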